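/- Let I be the radical ideal of a finite set X of reduced points in P^2 with reg(I^m) = m·α(I) for all m ≥ 1. Then I is minimally generated by α(I)+1 forms of degree α(I). -/

import Mathlib

open MvPolynomial

section SymbolicPower
variable {R : Type*} [CommRing R]

/-- The multiplicative set `U = R \ ⋃ P ∈ Ass(R/I), P`. -/
def assComplement (I : Ideal R) : Submonoid R where
  carrier := {x | ∀ P ∈ associatedPrimes R (R ⧸ I), x ∉ P}
  one_mem' := fun P hP => (Ideal.ne_top_iff_one P).mp hP.1.ne_top
  mul_mem' := by
    intro a b ha hb P hP hab
    rcases hP.1.mem_or_mem hab with h | h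
    · exact ha P hP h
    · exact hb P hP h

/-- The `m`-th symbolic power `I^(m) = R ∩ I^m R_U`. -/
def symbolicPower (I : Ideal R) (m : ℕ) : Ideal R :=
  Ideal.comap (algebraMap R (Localization (assComplement I)))
    (Ideal.map (algebraMap R (Localization (assComplement I))) (I ^ m))

/-- The resurgence `ρ(I) = sup { m/r : I^(m) ⊄ I^r }`. -/
noncomputable def resurgence (I : Ideal R) : ℝ :=
  sSup {x : ℝ | ∃ m r : ℕ, 0 < m ∧ 0 < r ∧ ¬ symbolicPower I m ≤ I ^ r ∧ x = (m : ℝ) / r}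

end SymbolicPower

section Poly
variable {K : Type*} [Field K] {n : ℕ}

attribute [local instance] MvPolynomial.gradedAlgebra

/-- The initial degree `α(I)`: the least degree of a nonzero element of `I`. -/
noncomputable def initDeg (I : Ideal (MvPolynomial (Fin n) K)) : ℕ :=
  sInf {t | ∃ f ∈ I, f ≠ 0 ∧ MvPolynomial.totalDegree f = t}

/-- The Waldschmidt constant `α̂(I) = inf_{m ≥ 1} α(I^(m))/m`. -/
noncomputable def waldschmidt (I : Ideal (MvPolynomial (Fin n) K)) : ℝ :=
  ⨅ m : ℕ+, (initDeg (symbolicPower I m) : ℝ) / (m : ℝ)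

/-- The vanishing (saturated radical) ideal of the projective point with homogeneous
coordinates `p`: all polynomials vanishing on the line spanned by `p`. -/
noncomputable def pointIdeal (p : Fin n → K) : Ideal (MvPolynomial (Fin n) K) :=
  ⨅ t : K, RingHom.ker (MvPolynomial.eval (t • p) : MvPolynomial (Fin n) K →+* K)

/-- An ideal is homogeneous w.r.t. the standard grading. -/
def IsHomogeneousIdeal (I : Ideal (MvPolynomial (Fin n) K)) : Prop :=
  Ideal.IsHomogeneous (homogeneousSubmodule (Fin n) K) I

/-- Two coordinate vectors represent the same projective point. -/
def ProjEq (u v : Fin n → K) : Prop := ∃ c : K, c ≠ 0 ∧ u = c • v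

/-- A homogeneous ideal is saturated (w.r.t. the irrelevant maximal ideal). -/
def IsSaturatedIdeal (J : Ideal (MvPolynomial (Fin n) K)) : Prop :=
  ∀ f, (∀ i, MvPolynomial.X i * f ∈ J) → f ∈ J

/-- The Hilbert function `t ↦ dim_K (R/J)_t` of a homogeneous ideal `J`. -/
noncomputable def hilbFun (J : Ideal (MvPolynomial (Fin n) K)) (t : ℕ) : ℕ :=
  Module.finrank K ((homogeneousSubmodule (Fin n) K t).map
    (Ideal.Quotient.mkₐ K J).toLinearMap)

/-- `I` is minimally generated by `k` forms of degree `δ`. -/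
def MinimallyGeneratedBy (I : Ideal (MvPolynomial (Fin n) K)) (k δ : ℕ) : Prop :=
  ∃ g : Fin k → MvPolynomial (Fin n) K,
    (∀ i, (g i).IsHomogeneous δ ∧ g i ≠ 0) ∧
    Ideal.span (Set.range g) = I ∧
    ∀ i, g i ∉ Ideal.span (g '' {j | j ≠ i})

/-- `IsMinFreeRes I e0 e1 e2 g A B` : the data of a graded minimal free resolution
`0 → ⊕_k R(-e2 k) -B→ ⊕_j R(-e1 j) -A→ ⊕_i R(-e0 i) → I → 0` of `I`. -/
def IsMinFreeRes (I : Ideal (MvPolynomial (Fin n) K)) {n0 n1 n2 : ℕ}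
    (e0 : Fin n0 → ℕ) (e1 : Fin n1 → ℕ) (e2 : Fin n2 → ℕ)
    (g : Fin n0 → MvPolynomial (Fin n) K)
    (A : Matrix (Fin n0) (Fin n1) (MvPolynomial (Fin n) K))
    (B : Matrix (Fin n1) (Fin n2) (MvPolynomial (Fin n) K)) : Prop :=
  (∀ i, (g i).IsHomogeneous (e0 i) ∧ g i ≠ 0) ∧
  Ideal.span (Set.range g) = I ∧
  (∀ i j, (A i j).IsHomogeneous (e1 j - e0 i) ∧ (e1 j ≤ e0 i → A i j = 0)) ∧
  (∀ j k, (B j k).IsHomogeneous (e2 k - e1 j) ∧ (e2 k ≤ e1 j → B j k = 0)) ∧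
  Function.Injective (Matrix.toLin' B) ∧
  LinearMap.range (Matrix.toLin' B) = LinearMap.ker (Matrix.toLin' A) ∧
  LinearMap.range (Matrix.toLin' A) =
    LinearMap.ker (Fintype.linearCombination (MvPolynomial (Fin n) K)
      g)

/-- The Castelnuovo–Mumford regularity of `I` is `r`: the minimal graded free
resolution of `I` satisfies `max_j (f_j - j) = r`. -/
def HasReg (I : Ideal (MvPolynomial (Fin n) K)) (r : ℕ) : Prop :=
  ∃ (n0 n1 n2 : ℕ) (e0 : Fin n0 → ℕ) (e1 : Fin n1 → ℕ) (e2 : Fin n2 → ℕ)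
    (g : Fin n0 → MvPolynomial (Fin n) K)
    (A : Matrix (Fin n0) (Fin n1) (MvPolynomial (Fin n) K))
    (B : Matrix (Fin n1) (Fin n2) (MvPolynomial (Fin n) K)),
    IsMinFreeRes I e0 e1 e2 g A B ∧
    r = max (Finset.univ.sup e0)
        (max (Finset.univ.sup fun j => e1 j - 1) (Finset.univ.sup fun k => e2 k - 2))

/-- `I` has the (minimal, linear) free resolution
`0 → R^d(-d-1) → R^{d+1}(-d) → I → 0`. -/
def HasLinearPointsRes (I : Ideal (MvPolynomial (Fin n) K)) (d : ℕ) : Prop :=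
  ∃ (g : Fin (d+1) → MvPolynomial (Fin n) K)
    (A : Matrix (Fin (d+1)) (Fin d) (MvPolynomial (Fin n) K)),
    (∀ i, (g i).IsHomogeneous d ∧ g i ≠ 0) ∧
    Ideal.span (Set.range g) = I ∧
    (∀ i j, (A i j).IsHomogeneous 1) ∧
    Function.Injective (Matrix.toLin' A) ∧
    LinearMap.range (Matrix.toLin' A) =
      LinearMap.ker (Fintype.linearCombination (MvPolynomial (Fin n) K)
        g)

/-- `I` has a minimal free resolution that is linear, with generators in degree `δ`. -/
def HasLinearResolution (I : Ideal (MvPolynomial (Fin n) K)) (δ : ℕ) : Prop :=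
  ∃ (n0 n1 n2 : ℕ) (g : Fin n0 → MvPolynomial (Fin n) K)
    (A : Matrix (Fin n0) (Fin n1) (MvPolynomial (Fin n) K))
    (B : Matrix (Fin n1) (Fin n2) (MvPolynomial (Fin n) K)),
    IsMinFreeRes I (fun _ => δ) (fun _ => δ + 1) (fun _ => δ + 2) g A B

end Poly

section QSC
variable (K : Type*) [Field K]

/-- A quasi star configuration `Z_d = T_d + S_2(2,d)` in `P^2`:
`d` general lines `L i` (pairwise distinct, no three concurrent), the star
configuration of their pairwise intersection points `p i j`, together with
`d` further distinct points `q i ∈ L i`, disjoint from the star points and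
not all collinear. -/
structure QuasiStarConfig (d : ℕ) where
  L : Fin d → MvPolynomial (Fin 3) K
  L_hom : ∀ i, (L i).IsHomogeneous 1
  L_ne : ∀ i, L i ≠ 0
  lines_distinct : ∀ i j, i ≠ j → ¬ ∃ c : K, L i = c • L j
  no_three_concurrent : ∀ i j k : Fin d, i ≠ j → i ≠ k → j ≠ k →
    ∀ v : Fin 3 → K, v ≠ 0 →
      ¬ (eval v (L i) = 0 ∧ eval v (L j) = 0 ∧ eval v (L k) = 0)
  p : Fin d → Fin d → (Fin 3 → K)
  p_ne : ∀ i j, i ≠ j → p i j ≠ 0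
  p_mem : ∀ i j, i ≠ j → eval (p i j) (L i) = 0 ∧ eval (p i j) (L j) = 0
  q : Fin d → (Fin 3 → K)
  q_ne : ∀ i, q i ≠ 0
  q_mem : ∀ i, eval (q i) (L i) = 0
  q_distinct : ∀ i j, i ≠ j → ¬ ProjEq (q i) (q j)
  q_not_star : ∀ i j k, j ≠ k → ¬ ProjEq (q i) (p j k)
  q_not_collinear : ¬ ∃ M : MvPolynomial (Fin 3) K,
    M.IsHomogeneous 1 ∧ M ≠ 0 ∧ ∀ i, eval (q i) M = 0

end QSC

/-- The defining (radical, saturated) ideal of a quasi star configuration. -/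
noncomputable def QuasiStarConfig.ideal {K : Type*} [Field K] {d : ℕ}
    (Z : QuasiStarConfig K d) :
    Ideal (MvPolynomial (Fin 3) K) :=
  (⨅ (i : Fin d) (j : Fin d) (_ : i ≠ j), pointIdeal (Z.p i j)) ⊓
    ⨅ i : Fin d, pointIdeal (Z.q i)

/-!
Write `α = α(I)`. Since `reg I = α` and no nonzero element of `I` has degree below `α`, the minimal
resolution `0 → R(-α-2)^{n₂} → R(-α-1)^{n₁} → R(-α)^{n₀} → I → 0` is linear. Taken degree by
degree it expresses `dim I_t` through `dim R_{t-α}`, `dim R_{t-α-1}`, `dim R_{t-α-2}`, while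
`dim I_t = dim R_t - |X|` for large `t` because the points impose independent conditions.
Comparing the two quadratics in `t` gives `n₀ = α + 1 + n₂` and `2|X| = α(α+1) - 2n₂`; since
no form of degree `α - 1` vanishes on `X`, also `α(α+1) = 2 dim R_{α-1} ≤ 2|X|`, so `n₂ = 0`
and `n₀ = α + 1`. The `n₀` generators are minimal because the syzygy matrix of a minimal
resolution has no nonzero constant entries.
-/

open Matrix

namespace MvPolynomial

variable {σ R : Type*} [CommSemiring R]

attribute [local instance] MvPolynomial.gradedAlgebra

theorem homogeneousComponent_mul_of_isHomogeneous {f g : MvPolynomial σ R} {a : ℕ}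
    (hg : g.IsHomogeneous a) (t : ℕ) :
    homogeneousComponent (t + a) (g * f) = g * homogeneousComponent t f := by
  have h := DirectSum.coe_decompose_mul_of_left_mem_of_le (homogeneousSubmodule σ R) (b := f) hg
    (Nat.le_add_left a t)
  rw [Nat.add_sub_cancel] at h
  rw [← decomposition.decompose'_apply, ← decomposition.decompose'_apply]
  exact h

theorem homogeneousComponent_dotProduct {ι : Type*} [Fintype ι] {g : ι → MvPolynomial σ R} {a : ℕ}
    (hg : ∀ i, (g i).IsHomogeneous a) (v : ι → MvPolynomial σ R) (t : ℕ) :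
    homogeneousComponent (t + a) (g ⬝ᵥ v) = g ⬝ᵥ fun i => homogeneousComponent t (v i) := by
  simp only [dotProduct, map_sum, homogeneousComponent_mul_of_isHomogeneous (hg _)]

theorem IsHomogeneous.constantCoeff_eq_zero {f : MvPolynomial σ R} {d : ℕ}
    (hf : f.IsHomogeneous d) (hd : d ≠ 0) : constantCoeff f = 0 := by
  rw [constantCoeff_eq]
  exact hf.coeff_eq_zero (by simpa using hd.symm)

theorem constantCoeff_eq_zero_of_isHomogeneous_sub {f : MvPolynomial σ R} {d e : ℕ}
    (hf : f.IsHomogeneous (e - d)) (h0 : e ≤ d → f = 0) : constantCoeff f = 0 := by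
  by_cases hed : e ≤ d
  · rw [h0 hed, map_zero]
  · exact hf.constantCoeff_eq_zero (by omega)

theorem constantCoeff_mulVec_eq_zero {ι κ : Type*} [Fintype κ] {B : Matrix ι κ (MvPolynomial σ R)}
    (hB : ∀ j k, constantCoeff (B j k) = 0) (w : κ → MvPolynomial σ R) (j : ι) :
    constantCoeff ((B *ᵥ w) j) = 0 := by
  simp [Matrix.mulVec, dotProduct, hB]

theorem IsHomogeneous.eval_smul [Fintype σ] {f : MvPolynomial σ R} {m : ℕ}
    (hf : f.IsHomogeneous m) (c : R) (q : σ → R) : eval (c • q) f = c ^ m * eval q f := by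
  rw [eval_eq', eval_eq', Finset.mul_sum]
  refine Finset.sum_congr rfl fun d hd => ?_
  have hdeg : d.degree = m := by
    by_contra hne
    exact mem_support_iff.1 hd (hf.coeff_eq_zero hne)
  simp only [Pi.smul_apply, smul_eq_mul, mul_pow, Finset.prod_mul_distrib,
    Finset.prod_pow_eq_pow_sum, ← Finsupp.degree_eq_sum, hdeg]
  ring

end MvPolynomial

noncomputable section GradedPieces

variable {σ K : Type*} [Field K] {ι κ : Type*}

local notation "𝓗" => homogeneousSubmodule σ K

variable (σ K ι) in
abbrev gradedIncl (s : ℕ) : (ι → 𝓗 s) →ₗ[K] (ι → MvPolynomial σ K) := (𝓗 s).subtype.compLeft ι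

theorem gradedIncl_injective (s : ℕ) : Function.Injective (gradedIncl σ K ι s) :=
  fun _ _ h => funext fun i => Subtype.ext (congrFun h i)

def Matrix.gradedMulVec [Fintype κ] (A : Matrix ι κ (MvPolynomial σ K)) {c : ℕ}
    (hA : ∀ i j, (A i j).IsHomogeneous c) (s : ℕ) : (κ → 𝓗 s) →ₗ[K] (ι → 𝓗 (s + c)) :=
  LinearMap.pi fun i =>
    (LinearMap.proj i ∘ₗ (Matrix.mulVecLin A).restrictScalars K ∘ₗ gradedIncl σ K κ s).codRestrict
      (𝓗 (s + c)) fun w => by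
        rw [add_comm]
        exact IsHomogeneous.sum _ _ _ fun j _ => (hA i j).mul (w j).2

variable [Fintype κ] {A : Matrix ι κ (MvPolynomial σ K)} {c : ℕ}
  (hA : ∀ i j, (A i j).IsHomogeneous c)

theorem Matrix.gradedIncl_gradedMulVec (s : ℕ) (w : κ → 𝓗 s) :
    gradedIncl σ K ι (s + c) (A.gradedMulVec hA s w) = A *ᵥ gradedIncl σ K κ s w := rfl

theorem Matrix.mulVec_homogeneousComponent (hA : ∀ i j, (A i j).IsHomogeneous c)
    (w : κ → MvPolynomial σ K) (s : ℕ) :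
    (A *ᵥ fun j => homogeneousComponent s (w j)) =
      fun i => homogeneousComponent (s + c) ((A *ᵥ w) i) :=
  funext fun i => (homogeneousComponent_dotProduct (hA i) w s).symm

theorem Matrix.mem_range_gradedMulVec_iff {s : ℕ} {v : ι → 𝓗 (s + c)} :
    v ∈ LinearMap.range (A.gradedMulVec hA s) ↔
      gradedIncl σ K ι (s + c) v ∈ LinearMap.range (Matrix.mulVecLin A) := by
  constructor
  · rintro ⟨w, rfl⟩
    exact ⟨_, (A.gradedIncl_gradedMulVec hA s w).symm⟩
  · rintro ⟨w, hw⟩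
    refine ⟨fun j => ⟨homogeneousComponent s (w j), homogeneousComponent_mem _ _⟩,
      gradedIncl_injective _ ?_⟩
    rw [Matrix.gradedIncl_gradedMulVec]
    refine (A.mulVec_homogeneousComponent hA w s).trans (funext fun i => ?_)
    rw [Matrix.mulVecLin_apply] at hw
    simp only [hw, LinearMap.compLeft_apply, Function.comp_apply, Submodule.subtype_apply]
    exact homogeneousComponent_of_mem (v i).2 |>.trans (if_pos rfl)

theorem Matrix.mem_ker_gradedMulVec_iff {s : ℕ} {w : κ → 𝓗 s} :
    w ∈ LinearMap.ker (A.gradedMulVec hA s) ↔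
      gradedIncl σ K κ s w ∈ LinearMap.ker (Matrix.mulVecLin A) := by
  rw [LinearMap.mem_ker, LinearMap.mem_ker, Matrix.mulVecLin_apply,
    ← Matrix.gradedIncl_gradedMulVec, ← map_zero (gradedIncl σ K ι (s + c)),
    (gradedIncl_injective _).eq_iff]

theorem Matrix.ker_gradedMulVec_eq_range {μ : Type*} [Fintype μ]
    {B : Matrix κ μ (MvPolynomial σ K)} {c' : ℕ} (hB : ∀ j k, (B j k).IsHomogeneous c')
    (hAB : LinearMap.range (Matrix.mulVecLin B) = LinearMap.ker (Matrix.mulVecLin A)) (s : ℕ) :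
    LinearMap.ker (A.gradedMulVec hA (s + c')) = LinearMap.range (B.gradedMulVec hB s) := by
  ext w
  rw [A.mem_ker_gradedMulVec_iff hA, B.mem_range_gradedMulVec_iff hB, hAB]

theorem Matrix.ker_gradedMulVec_eq_bot
    (hinj : Function.Injective (Matrix.mulVecLin A)) (s : ℕ) :
    LinearMap.ker (A.gradedMulVec hA s) = ⊥ := by
  ext w
  rw [A.mem_ker_gradedMulVec_iff hA, LinearMap.ker_eq_bot.2 hinj, Submodule.mem_bot,
    Submodule.mem_bot, ← map_zero (gradedIncl σ K κ s), (gradedIncl_injective s).eq_iff]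

def Ideal.degreePart (I : Ideal (MvPolynomial σ K)) (t : ℕ) : Submodule K (MvPolynomial σ K) :=
  I.restrictScalars K ⊓ 𝓗 t

theorem Ideal.degreePart_le (I : Ideal (MvPolynomial σ K)) (t : ℕ) : I.degreePart t ≤ 𝓗 t :=
  inf_le_right

theorem initDeg_le_totalDegree {m : ℕ} {I : Ideal (MvPolynomial (Fin m) K)}
    {f : MvPolynomial (Fin m) K} (hfI : f ∈ I) (hf : f ≠ 0) : initDeg I ≤ f.totalDegree :=
  Nat.sInf_le ⟨f, hfI, hf, rfl⟩

theorem Ideal.degreePart_eq_bot_of_lt_initDeg {m t : ℕ} {I : Ideal (MvPolynomial (Fin m) K)}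
    (ht : t < initDeg I) : I.degreePart t = ⊥ := by
  refine eq_bot_iff.2 fun f ⟨hfI, hft⟩ => (Submodule.mem_bot K).2 (by_contra fun hf => ?_)
  have := initDeg_le_totalDegree hfI hf
  rw [(mem_homogeneousSubmodule t f).1 hft |>.totalDegree hf] at this
  omega

variable (σ K) in
def gradedLinearCombination [Fintype ι] (g : ι → MvPolynomial σ K) (s : ℕ) :
    (ι → 𝓗 s) →ₗ[K] MvPolynomial σ K :=
  (Fintype.linearCombination (MvPolynomial σ K) g).restrictScalars K ∘ₗ gradedIncl σ K ι s

variable [Fintype ι] {g : ι → MvPolynomial σ K}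

theorem linearCombination_eq_dotProduct (v : ι → MvPolynomial σ K) :
    Fintype.linearCombination (MvPolynomial σ K) g v = g ⬝ᵥ v := by
  simp only [Fintype.linearCombination_apply, smul_eq_mul, dotProduct, mul_comm]

theorem range_gradedLinearCombination {a : ℕ} (hg : ∀ i, (g i).IsHomogeneous a) (s : ℕ) :
    LinearMap.range (gradedLinearCombination σ K g s) =
      (Ideal.span (Set.range g)).degreePart (s + a) := by
  apply le_antisymm
  · rintro x ⟨v, rfl⟩
    simp only [gradedLinearCombination, LinearMap.comp_apply, LinearMap.restrictScalars_apply,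
      linearCombination_eq_dotProduct]
    refine ⟨Submodule.sum_mem _ fun i _ => Ideal.mul_mem_right _ _ (Ideal.subset_span ⟨i, rfl⟩),
      ?_⟩
    rw [add_comm]
    exact IsHomogeneous.sum _ _ _ fun i _ => (hg i).mul (v i).2
  · rintro x ⟨hxI, hx⟩
    obtain ⟨c, rfl⟩ := Ideal.mem_span_range_iff_exists_fun.1 hxI
    have hc : ∑ i, c i * g i = g ⬝ᵥ c := by simp only [dotProduct, mul_comm]
    refine ⟨fun i => ⟨homogeneousComponent s (c i), homogeneousComponent_mem _ _⟩, ?_⟩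
    rw [gradedLinearCombination, LinearMap.comp_apply, LinearMap.restrictScalars_apply,
      linearCombination_eq_dotProduct]
    change g ⬝ᵥ (fun i => homogeneousComponent s (c i)) = _
    rw [hc, ← homogeneousComponent_dotProduct hg, ← hc, homogeneousComponent_of_mem hx, if_pos rfl]

theorem ker_gradedLinearCombination_eq_range
    (hAg : LinearMap.range (Matrix.mulVecLin A) =
      LinearMap.ker (Fintype.linearCombination (MvPolynomial σ K) g)) (s : ℕ) :
    LinearMap.ker (gradedLinearCombination σ K g (s + c)) =
      LinearMap.range (A.gradedMulVec hA s) := by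
  ext v
  rw [A.mem_range_gradedMulVec_iff hA, hAg]
  rfl

end GradedPieces

section Finrank

variable {σ K : Type*} [Field K]

instance [Finite σ] (t : ℕ) : FiniteDimensional K (homogeneousSubmodule σ K t) :=
  Module.Finite.iff_fg.2 (homogeneousSubmodule_fg σ K t)

theorem finrank_homogeneousSubmodule [Fintype σ] [DecidableEq σ] (t : ℕ) :
    Module.finrank K (homogeneousSubmodule σ K t) = (Fintype.card σ).multichoose t := by
  have hset : {d : σ →₀ ℕ | d.degree = t} =
      ((Finset.univ : Finset σ).finsuppAntidiag t : Set (σ →₀ ℕ)) := by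
    ext d
    simp [Finset.mem_finsuppAntidiag, Finsupp.degree_eq_sum]
  rw [((LinearEquiv.ofEq _ _ (homogeneousSubmodule_eq_finsupp_supported σ K t)).trans
    (AddMonoidAlgebra.supportedEquivFinsupp _)).finrank_eq, hset, Module.finrank_finsupp_self]
  simp only [Finset.coe_sort_coe, Fintype.card_coe, Finset.card_finsuppAntidiag_nat_eq_multichoose,
    Finset.card_univ]

theorem two_mul_finrank_homogeneousSubmodule_fin_three (t : ℕ) :
    2 * Module.finrank K (homogeneousSubmodule (Fin 3) K t) = (t + 1) * (t + 2) := by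
  rw [finrank_homogeneousSubmodule, Fintype.card_fin, Nat.multichoose_eq,
    show 3 + t - 1 = t + 2 by omega, Nat.choose_symm_add]
  have h := Nat.cast_choose_two ℚ (t + 2)
  push_cast at h
  exact_mod_cast (by rw [h]; ring : (2 * (Nat.choose (t + 2) 2 : ℚ)) = (t + 1) * (t + 2))

theorem finrank_fun_homogeneousSubmodule [Finite σ] (ι : Type*) [Fintype ι] (t : ℕ) :
    Module.finrank K (ι → homogeneousSubmodule σ K t) =
      Fintype.card ι * Module.finrank K (homogeneousSubmodule σ K t) := by
  simp [Module.finrank_pi_fintype]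

theorem IsMinFreeRes.finrank_degreePart_add {m n0 n1 n2 δ : ℕ} {I : Ideal (MvPolynomial (Fin m) K)}
    {g : Fin n0 → MvPolynomial (Fin m) K} {A : Matrix (Fin n0) (Fin n1) (MvPolynomial (Fin m) K)}
    {B : Matrix (Fin n1) (Fin n2) (MvPolynomial (Fin m) K)}
    (h : IsMinFreeRes I (fun _ => δ) (fun _ => δ + 1) (fun _ => δ + 2) g A B) (s : ℕ) :
    Module.finrank K (I.degreePart (s + 2 + δ)) +
        n1 * Module.finrank K (homogeneousSubmodule (Fin m) K (s + 1)) =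
      n0 * Module.finrank K (homogeneousSubmodule (Fin m) K (s + 2)) +
        n2 * Module.finrank K (homogeneousSubmodule (Fin m) K s) := by
  obtain ⟨hg, rfl, hA, hB, hBinj, hBA, hAg⟩ := h
  have hA1 : ∀ i j, (A i j).IsHomogeneous 1 := fun i j => by simpa using (hA i j).1
  have hB1 : ∀ j k, (B j k).IsHomogeneous 1 := fun j k => by
    simpa [show δ + 2 - (δ + 1) = 1 by omega] using (hB j k).1
  simp only [Matrix.toLin'_apply'] at hBinj hBA hAg
  have e0 := LinearMap.finrank_range_add_finrank_ker (gradedLinearCombination _ K g (s + 2))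
  rw [range_gradedLinearCombination (fun i => (hg i).1),
    ker_gradedLinearCombination_eq_range hA1 hAg (s + 1)] at e0
  have e1 := LinearMap.finrank_range_add_finrank_ker (A.gradedMulVec hA1 (s + 1))
  rw [A.ker_gradedMulVec_eq_range hA1 hB1 hBA s] at e1
  have e2 := LinearMap.finrank_range_add_finrank_ker (B.gradedMulVec hB1 s)
  rw [B.ker_gradedMulVec_eq_bot hB1 hBinj s, finrank_bot] at e2
  simp only [finrank_fun_homogeneousSubmodule, Fintype.card_fin] at e0 e1 e2
  linarith

end Finrank

noncomputable section Points

variable {K : Type*} [Field K] {m : ℕ}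

theorem mem_pointIdeal_iff {f : MvPolynomial (Fin m) K} {t : ℕ} (hf : f.IsHomogeneous t)
    (q : Fin m → K) : f ∈ pointIdeal q ↔ eval q f = 0 := by
  simp only [pointIdeal, Ideal.mem_iInf, RingHom.mem_ker, hf.eval_smul]
  exact ⟨fun h => by simpa using h 1, fun h c => by rw [h, mul_zero]⟩

theorem projEq_of_mul_eq_mul {u v : Fin m → K} (hu : u ≠ 0) (hv : v ≠ 0)
    (h : ∀ a b, u a * v b = u b * v a) : ProjEq u v := by
  obtain ⟨b, hb⟩ : ∃ b, v b ≠ 0 := Function.ne_iff.1 hv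
  have hub : u b ≠ 0 := fun hub => hu (funext fun a => by simpa [hub, hb] using h a b)
  refine ⟨u b / v b, div_ne_zero hub hb, funext fun a => ?_⟩
  rw [Pi.smul_apply, smul_eq_mul, div_mul_eq_mul_div, eq_div_iff hb]
  exact h a b

theorem exists_linearForm_eval_ne_zero {u : Fin m → K} (hu : u ≠ 0) :
    ∃ L : MvPolynomial (Fin m) K, L.IsHomogeneous 1 ∧ eval u L ≠ 0 := by
  obtain ⟨a, ha⟩ : ∃ a, u a ≠ 0 := Function.ne_iff.1 hu
  exact ⟨X a, isHomogeneous_X K a, by simpa using ha⟩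

theorem exists_linearForm_eval_eq_zero_ne_zero {u v : Fin m → K} (hu : u ≠ 0) (hv : v ≠ 0)
    (huv : ¬ ProjEq u v) :
    ∃ L : MvPolynomial (Fin m) K, L.IsHomogeneous 1 ∧ eval v L = 0 ∧ eval u L ≠ 0 := by
  obtain ⟨a, b, hab⟩ : ∃ a b, u a * v b ≠ u b * v a := by
    by_contra! h
    exact huv (projEq_of_mul_eq_mul hu hv h)
  refine ⟨C (v b) * X a - C (v a) * X b,
    (isHomogeneous_C_mul_X _ a).sub (isHomogeneous_C_mul_X _ b), ?_, ?_⟩ <;>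
    simp only [map_sub, map_mul, eval_C, eval_X]
  · ring
  · exact fun h => hab (by linear_combination h)

variable {ι : Type*} {p : ι → Fin m → K}

theorem exists_isHomogeneous_eval_eq_single [Fintype ι] [DecidableEq ι] (hp : ∀ i, p i ≠ 0)
    (hdist : ∀ i j, i ≠ j → ¬ ProjEq (p i) (p j)) {t : ℕ} (ht : Fintype.card ι ≤ t + 1) (i : ι) :
    ∃ F : MvPolynomial (Fin m) K, F.IsHomogeneous t ∧ (fun j => eval (p j) F) = Pi.single i 1 := by
  have hL : ∀ j, ∃ L : MvPolynomial (Fin m) K,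
      L.IsHomogeneous 1 ∧ (j ≠ i → eval (p j) L = 0) ∧ eval (p i) L ≠ 0 := fun j => by
    by_cases hji : j = i
    · obtain ⟨L, hL, hLi⟩ := exists_linearForm_eval_ne_zero (hp i)
      exact ⟨L, hL, absurd hji, hLi⟩
    · obtain ⟨L, hL, hLj, hLi⟩ :=
        exists_linearForm_eval_eq_zero_ne_zero (hp i) (hp j) (hdist i j (Ne.symm hji))
      exact ⟨L, hL, fun _ => hLj, hLi⟩
  choose L hL hLj hLi using hL
  set G := L i ^ (t + 1 - Fintype.card ι) * ∏ j ∈ Finset.univ.erase i, L j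
  have hG : G.IsHomogeneous t := by
    have := ((hL i).pow (t + 1 - Fintype.card ι)).mul
      (IsHomogeneous.prod (Finset.univ.erase i) _ _ fun j _ => hL j)
    have hcard : 0 < Fintype.card ι := Fintype.card_pos_iff.2 ⟨i⟩
    rwa [Finset.sum_const, smul_eq_mul, mul_one, Finset.card_erase_of_mem (Finset.mem_univ i),
      Finset.card_univ, show 1 * (t + 1 - Fintype.card ι) + (Fintype.card ι - 1) = t by omega]
      at this
  have hGi : eval (p i) G ≠ 0 := by
    simp only [G, map_mul, map_pow, map_prod]
    exact mul_ne_zero (pow_ne_zero _ (hLi i)) (Finset.prod_ne_zero_iff.2 fun j _ => hLi j)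
  refine ⟨C (eval (p i) G)⁻¹ * G, by simpa using (isHomogeneous_C _ _).mul hG, funext fun j => ?_⟩
  by_cases hji : j = i
  · subst hji
    simp [hGi]
  · have hGj : eval (p j) G = 0 := by
      simp only [G, map_mul, map_prod]
      rw [Finset.prod_eq_zero (Finset.mem_erase.2 ⟨hji, Finset.mem_univ j⟩) (hLj j hji), mul_zero]
    simp [hGj, hji]

def pointsEval (p : ι → Fin m → K) : MvPolynomial (Fin m) K →ₗ[K] ι → K :=
  LinearMap.pi fun i => (aeval (p i)).toLinearMap

@[simp]
theorem pointsEval_apply (f : MvPolynomial (Fin m) K) (i : ι) : pointsEval p f i = eval (p i) f :=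
  rfl

theorem ker_pointsEval_domRestrict (t : ℕ) :
    LinearMap.ker ((pointsEval p).domRestrict (homogeneousSubmodule (Fin m) K t)) =
      ((⨅ i, pointIdeal (p i)).degreePart t).comap (homogeneousSubmodule (Fin m) K t).subtype := by
  ext ⟨f, hf⟩
  simp only [LinearMap.mem_ker, LinearMap.domRestrict_apply, funext_iff, pointsEval_apply,
    Pi.zero_apply, Submodule.mem_comap, Submodule.subtype_apply, Ideal.degreePart,
    Submodule.mem_inf, Submodule.restrictScalars_mem, Ideal.mem_iInf, mem_pointIdeal_iff hf]
  exact ⟨fun h => ⟨h, hf⟩, And.left⟩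

theorem finrank_degreePart_add_finrank_range [Fintype ι] (t : ℕ) :
    Module.finrank K ((⨅ i, pointIdeal (p i)).degreePart t) +
        Module.finrank K
          (LinearMap.range ((pointsEval p).domRestrict (homogeneousSubmodule (Fin m) K t))) =
      Module.finrank K (homogeneousSubmodule (Fin m) K t) := by
  have h := LinearMap.finrank_range_add_finrank_ker
    ((pointsEval p).domRestrict (homogeneousSubmodule (Fin m) K t))
  rw [ker_pointsEval_domRestrict,
    (Submodule.comapSubtypeEquivOfLe (Ideal.degreePart_le _ t)).finrank_eq] at h
  rw [← h, add_comm]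

theorem range_pointsEval_domRestrict_eq_top [Fintype ι] (hp : ∀ i, p i ≠ 0)
    (hdist : ∀ i j, i ≠ j → ¬ ProjEq (p i) (p j)) {t : ℕ} (ht : Fintype.card ι ≤ t + 1) :
    LinearMap.range ((pointsEval p).domRestrict (homogeneousSubmodule (Fin m) K t)) = ⊤ := by
  classical
  rw [eq_top_iff, ← (Pi.basisFun K ι).span_eq, Submodule.span_le]
  rintro _ ⟨i, rfl⟩
  obtain ⟨F, hF, hFi⟩ := exists_isHomogeneous_eval_eq_single hp hdist ht i
  exact ⟨⟨F, hF⟩, by rw [Pi.basisFun_apply, ← hFi]; rfl⟩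

theorem finrank_degreePart_add_card [Fintype ι] (hp : ∀ i, p i ≠ 0)
    (hdist : ∀ i j, i ≠ j → ¬ ProjEq (p i) (p j)) {t : ℕ} (ht : Fintype.card ι ≤ t + 1) :
    Module.finrank K ((⨅ i, pointIdeal (p i)).degreePart t) + Fintype.card ι =
      Module.finrank K (homogeneousSubmodule (Fin m) K t) := by
  rw [← finrank_degreePart_add_finrank_range (p := p),
    range_pointsEval_domRestrict_eq_top hp hdist ht, finrank_top,
    Module.finrank_fintype_fun_eq_card]

theorem finrank_homogeneousSubmodule_le_card_of_lt_initDeg [Fintype ι] {t : ℕ}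
    (ht : t < initDeg (⨅ i, pointIdeal (p i))) :
    Module.finrank K (homogeneousSubmodule (Fin m) K t) ≤ Fintype.card ι := by
  rw [← finrank_degreePart_add_finrank_range (p := p), Ideal.degreePart_eq_bot_of_lt_initDeg ht,
    finrank_bot, zero_add]
  exact (Submodule.finrank_le _).trans_eq (Module.finrank_fintype_fun_eq_card K)

end Points

section Resolution

variable {K : Type*} [Field K] {m n0 n1 n2 : ℕ} {I : Ideal (MvPolynomial (Fin m) K)}
  {e0 : Fin n0 → ℕ} {e1 : Fin n1 → ℕ} {e2 : Fin n2 → ℕ} {g : Fin n0 → MvPolynomial (Fin m) K}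
  {A : Matrix (Fin n0) (Fin n1) (MvPolynomial (Fin m) K)}
  {B : Matrix (Fin n1) (Fin n2) (MvPolynomial (Fin m) K)}

namespace IsMinFreeRes

theorem initDeg_le (h : IsMinFreeRes I e0 e1 e2 g A B) (i : Fin n0) : initDeg I ≤ e0 i := by
  obtain ⟨hg, rfl, -⟩ := h
  have := initDeg_le_totalDegree (Ideal.subset_span (Set.mem_range_self i)) (hg i).2
  rwa [(hg i).1.totalDegree (hg i).2] at this

theorem lt_of_A_ne_zero (h : IsMinFreeRes I e0 e1 e2 g A B) {i j} (hij : A i j ≠ 0) :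
    e0 i < e1 j :=
  lt_of_not_ge fun hle => hij ((h.2.2.1 i j).2 hle)

theorem lt_of_B_ne_zero (h : IsMinFreeRes I e0 e1 e2 g A B) {j k} (hjk : B j k ≠ 0) :
    e1 j < e2 k :=
  lt_of_not_ge fun hle => hjk ((h.2.2.2.1 j k).2 hle)

theorem constantCoeff_A (h : IsMinFreeRes I e0 e1 e2 g A B) (i j) : constantCoeff (A i j) = 0 :=
  constantCoeff_eq_zero_of_isHomogeneous_sub (h.2.2.1 i j).1 (h.2.2.1 i j).2

theorem constantCoeff_B (h : IsMinFreeRes I e0 e1 e2 g A B) (j k) : constantCoeff (B j k) = 0 :=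
  constantCoeff_eq_zero_of_isHomogeneous_sub (h.2.2.2.1 j k).1 (h.2.2.2.1 j k).2

theorem exists_A_ne_zero (h : IsMinFreeRes I e0 e1 e2 g A B) (j : Fin n1) : ∃ i, A i j ≠ 0 := by
  by_contra! hA0
  obtain ⟨w, hw⟩ : Pi.single j 1 ∈ LinearMap.range (Matrix.toLin' B) := by
    rw [h.2.2.2.2.2.1, LinearMap.mem_ker, Matrix.toLin'_apply]
    funext i
    simp [hA0 i]
  have := constantCoeff_mulVec_eq_zero h.constantCoeff_B w j
  rw [← Matrix.toLin'_apply, hw, Pi.single_eq_same, map_one] at this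
  exact one_ne_zero this

theorem exists_B_ne_zero (h : IsMinFreeRes I e0 e1 e2 g A B) (k : Fin n2) : ∃ j, B j k ≠ 0 := by
  by_contra! hB0
  have := @h.2.2.2.2.1 (Pi.single k 1) 0 (by
    rw [map_zero, Matrix.toLin'_apply]
    funext j
    simp [hB0 j])
  simpa using congrFun this k

theorem minimallyGeneratedBy {δ : ℕ} (h : IsMinFreeRes I (fun _ => δ) e1 e2 g A B) :
    MinimallyGeneratedBy I n0 δ := by
  refine ⟨g, h.1, h.2.1, fun i hi => ?_⟩
  obtain ⟨l, hl, hli⟩ := (Finsupp.mem_span_image_iff_linearCombination _).1 hi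
  obtain ⟨w, hw⟩ : ⇑l - Pi.single i 1 ∈ LinearMap.range (Matrix.toLin' A) := by
    rw [h.2.2.2.2.2.2, LinearMap.mem_ker, map_sub, Fintype.linearCombination_apply_single,
      one_smul, ← Finsupp.linearCombination_eq_fintype_linearCombination_apply,
      Finsupp.linearEquivFunOnFinite_symm_coe, hli, sub_self]
  have := constantCoeff_mulVec_eq_zero h.constantCoeff_A w i
  rw [← Matrix.toLin'_apply, hw, Pi.sub_apply, (Finsupp.mem_supported' _ _).1 hl i (by simp),
    Pi.single_eq_same, zero_sub, map_neg, map_one, neg_eq_zero] at this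
  exact one_ne_zero this

end IsMinFreeRes

theorem HasReg.hasLinearResolution (h : HasReg I (initDeg I)) :
    HasLinearResolution I (initDeg I) := by
  obtain ⟨n0, n1, n2, e0, e1, e2, g, A, B, hres, hreg⟩ := h
  have h0 : ∀ i, e0 i ≤ initDeg I := fun i =>
    hreg ▸ (Finset.le_sup (Finset.mem_univ i)).trans (le_max_left _ _)
  have h1 : ∀ j, e1 j - 1 ≤ initDeg I := fun j =>
    hreg ▸ (Finset.le_sup (f := fun j => e1 j - 1) (Finset.mem_univ j)).trans
      ((le_max_left _ _).trans (le_max_right _ _))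
  have h2 : ∀ k, e2 k - 2 ≤ initDeg I := fun k =>
    hreg ▸ (Finset.le_sup (f := fun k => e2 k - 2) (Finset.mem_univ k)).trans
      ((le_max_right _ _).trans (le_max_right _ _))
  have he0 : ∀ i, e0 i = initDeg I := fun i => le_antisymm (h0 i) (hres.initDeg_le i)
  have he1 : ∀ j, e1 j = initDeg I + 1 := fun j => by
    obtain ⟨i, hi⟩ := hres.exists_A_ne_zero j
    have := hres.lt_of_A_ne_zero hi
    have := h1 j
    have := he0 i
    omega
  have he2 : ∀ k, e2 k = initDeg I + 2 := fun k => by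
    obtain ⟨j, hj⟩ := hres.exists_B_ne_zero k
    have := hres.lt_of_B_ne_zero hj
    have := h2 k
    have := he1 j
    omega
  rw [show e0 = _ from funext he0, show e1 = _ from funext he1, show e2 = _ from funext he2] at hres
  exact ⟨n0, n1, n2, g, A, B, hres⟩

end Resolution

theorem eq_add_one_of_quadratic_identity {α c n0 n1 n2 : ℕ} (hlow : α * (α + 1) ≤ 2 * c)
    (h : ∀ s, c ≤ s → (s + α + 3) * (s + α + 4) + n1 * ((s + 2) * (s + 3)) =
      2 * c + n0 * ((s + 3) * (s + 4)) + n2 * ((s + 1) * (s + 2))) :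
    n0 = α + 1 := by
  have F0 := h c le_rfl
  have F1 := h (c + 1) (by omega)
  have F2 := h (c + 2) (by omega)
  zify at hlow F0 F1 F2 ⊢
  -- Both sides are quadratic in `s`, so three values determine them; these combinations of
  -- the three instances read off the resulting identities between the coefficients.
  have hn0 : 2 * (n0 : ℤ) = 2 * (α + 1 + n2) := by
    linear_combination (c + 4 : ℤ) * F0 - (2 * c + 7 : ℤ) * F1 + (c + 3 : ℤ) * F2
  have hc : 4 * (c : ℤ) = 2 * α * (α + 1) - 4 * n2 := by
    linear_combination (-2 - 2 * (c + 3) * (c + 5) + (c + 3) * (c + 4) : ℤ) * F0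
      + (2 * (c + 3) * (c + 5) : ℤ) * F1 - ((c + 3) * (c + 4) : ℤ) * F2
  linarith

theorem initDeg_mul_succ_le {K : Type*} [Field K] {ι : Type*} [Fintype ι] {p : ι → Fin 3 → K} :
    initDeg (⨅ i, pointIdeal (p i)) * (initDeg (⨅ i, pointIdeal (p i)) + 1) ≤
      2 * Fintype.card ι := by
  set α := initDeg (⨅ i, pointIdeal (p i))
  rcases Nat.eq_zero_or_pos α with hα | hα
  · simp [hα]
  have hle := finrank_homogeneousSubmodule_le_card_of_lt_initDeg (p := p) (t := α - 1) (by omega)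
  have hdim := two_mul_finrank_homogeneousSubmodule_fin_three (K := K) (α - 1)
  rw [Nat.sub_add_cancel hα, show α - 1 + 2 = α + 1 by omega] at hdim
  linarith

theorem IsMinFreeRes.card_eq_initDeg_add_one {K : Type*} [Field K] {ι : Type*} [Fintype ι]
    {p : ι → Fin 3 → K} (hp : ∀ i, p i ≠ 0) (hdist : ∀ i j, i ≠ j → ¬ ProjEq (p i) (p j))
    {I : Ideal (MvPolynomial (Fin 3) K)} (hI : I = ⨅ i, pointIdeal (p i)) {n0 n1 n2 : ℕ}
    {g : Fin n0 → MvPolynomial (Fin 3) K} {A : Matrix (Fin n0) (Fin n1) (MvPolynomial (Fin 3) K)}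
    {B : Matrix (Fin n1) (Fin n2) (MvPolynomial (Fin 3) K)}
    (h : IsMinFreeRes I (fun _ => initDeg I) (fun _ => initDeg I + 1) (fun _ => initDeg I + 2)
      g A B) :
    n0 = initDeg I + 1 := by
  subst hI
  set α := initDeg (⨅ i, pointIdeal (p i))
  have hdim := two_mul_finrank_homogeneousSubmodule_fin_three (K := K)
  refine eq_add_one_of_quadratic_identity (n1 := n1) (n2 := n2) initDeg_mul_succ_le fun s hs => ?_
  have e1 := h.finrank_degreePart_add s
  have e2 := finrank_degreePart_add_card hp hdist (t := s + 2 + α) (by omega)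
  have d0 := hdim s
  have d1 := hdim (s + 1)
  have d2 := hdim (s + 2)
  have dα := hdim (s + 2 + α)
  zify at e1 e2 d0 d1 d2 dα ⊢
  linear_combination 2 * e1 - 2 * e2 - dα - (n1 : ℤ) * d1 + (n0 : ℤ) * d2 + (n2 : ℤ) * d0

theorem min_gen_of_reg_pow_general {K : Type*} [Field K]
    (n : ℕ) (p : Fin n → (Fin 3 → K)) (hp : ∀ i, p i ≠ 0)
    (hdist : ∀ i j, i ≠ j → ¬ ProjEq (p i) (p j))
    (I : Ideal (MvPolynomial (Fin 3) K)) (hI : I = ⨅ i, pointIdeal (p i))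
    (hreg : ∀ m : ℕ, 1 ≤ m → HasReg (I ^ m) (m * initDeg I)) :
    MinimallyGeneratedBy I (initDeg I + 1) (initDeg I) := by
  obtain ⟨n0, n1, n2, g, A, B, hres⟩ : HasLinearResolution I (initDeg I) :=
    HasReg.hasLinearResolution (by simpa using hreg 1 le_rfl)
  rw [← hres.card_eq_initDeg_add_one hp hdist hI]
  exact hres.minimallyGeneratedBy

/-- if `reg(I^m) = m·α(I)` for all `m ≥ 1`, where `I` is the radical ideal
of a finite set of reduced points in `P^2`, then `I` is minimally generated by
`α(I)+1` forms of degree `α(I)`. -/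
theorem min_gen_of_reg_pow {K : Type*} [Field K] [IsAlgClosed K]
    (n : ℕ) (hn : 0 < n) (p : Fin n → (Fin 3 → K)) (hp : ∀ i, p i ≠ 0)
    (hdist : ∀ i j, i ≠ j → ¬ ProjEq (p i) (p j))
    (I : Ideal (MvPolynomial (Fin 3) K)) (hI : I = ⨅ i, pointIdeal (p i))
    (hreg : ∀ m : ℕ, 1 ≤ m → HasReg (I ^ m) (m * initDeg I)) :
    MinimallyGeneratedBy I (initDeg I + 1) (initDeg I) :=
  min_gen_of_reg_pow_general n p hp hdist I hI hreg
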